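/- Let A : ℝ → Matrix (Fin n) (Fin n) ℝ, B : ℝ → Matrix (Fin m) (Fin m) ℝ, P : ℝ → Matrix (Fin m) (Fin n) ℝ, Q : ℝ → Matrix (Fin n) (Fin m) ℝ be continuous on [0, b]. Suppose Y : ℝ → Matrix (Fin n) (Fin m) ℝ is a differentiable solution of the Riccati equation d/dx Y(x) + Y(x)·P(x)·Y(x) + Y(x)·B(x) − A(x)·Y(x) − Q(x) = 0 with Y(0) = 0, and let W₀ be an n × m real matrix. Define R(x) := ℱ(−(B + P·Y))(x) · P(x) · ℰ(A − Y·P)(x). Then on any subinterval [0, c] ⊆ [0, b] on which the m × m matrix 1 + (∫_0^x R(t) dt) · W₀ is invertible for all x, the function W(x) := Y(x) + ℰ(A − Y·P)(x) · W₀ · (1 + (∫_0^x R(t) dt) · W₀)⁻¹ · ℱ(−(B + P·Y))(x) is differentiable, satisfies W(0) = W₀, and solves the Riccati equation d/dx W(x) + W(x)·P(x)·W(x) + W(x)·B(x) − A(x)·W(x) − Q(x) = 0. -/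

import Mathlib

open MeasureTheory Matrix

/- Matrices are equipped with the elementwise sup norm. -/
attribute [local instance] Matrix.normedAddCommGroup Matrix.normedSpace

/-- Terms of the left integral series: `E_0(x) = 1`, `E_{k+1}(x) = ∫_0^x X(t) * E_k(t) dt`. -/
noncomputable def lterm {ι : Type*} [Fintype ι] [DecidableEq ι]
    (X : ℝ → Matrix ι ι ℝ) : ℕ → ℝ → Matrix ι ι ℝ
  | 0, _ => 1
  | k + 1, x => ∫ t in (0:ℝ)..x, X t * lterm X k t

/-- The left integral series `ℰ(X)(x) = ∑_{k=0}^∞ E_k(x)`. -/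
noncomputable def ES {ι : Type*} [Fintype ι] [DecidableEq ι]
    (X : ℝ → Matrix ι ι ℝ) (x : ℝ) : Matrix ι ι ℝ := ∑' k, lterm X k x

/-- Terms of the right integral series: `F_0(x) = 1`, `F_{k+1}(x) = ∫_0^x F_k(t) * X(t) dt`. -/
noncomputable def rterm {ι : Type*} [Fintype ι] [DecidableEq ι]
    (X : ℝ → Matrix ι ι ℝ) : ℕ → ℝ → Matrix ι ι ℝ
  | 0, _ => 1
  | k + 1, x => ∫ t in (0:ℝ)..x, rterm X k t * X t

/-- The right integral series `ℱ(X)(x) = ∑_{k=0}^∞ F_k(x)`. -/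
noncomputable def FS {ι : Type*} [Fintype ι] [DecidableEq ι]
    (X : ℝ → Matrix ι ι ℝ) (x : ℝ) : Matrix ι ι ℝ := ∑' k, rterm X k x

/-!
Write `W = Y + Z`. Since `Y` solves the Riccati equation, `W` solves it iff `Z` solves the
Bernoulli equation `Z' = (A - Y P) Z - Z (B + P Y) - Z P Z`. This equation is linearised by
`Z = U W₀ N⁻¹ V` with `U' = (A - Y P) U`, `V' = -V (B + P Y)` and `N = 1 + (∫ V P U) W₀`,
because `(N⁻¹)' = -N⁻¹ V P U W₀ N⁻¹`. The integral series `ℰ(A - Y P)` and `ℱ(-(B + P Y))` are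
such `U` and `V`: they are Picard series of linear equations, which converge uniformly on `[0, b]`
by the bound `‖E_k(x)‖ ≤ ‖E_0‖ (M x)^k / k!`, so their sums solve the integral equations.
-/

open Set Filter Topology intervalIntegral
open scoped Nat

section Picard

variable {F : Type*} [NormedAddCommGroup F] [NormedSpace ℝ F]

theorem ContinuousOn.hasDerivWithinAt_integral [CompleteSpace F] {f : ℝ → F} {a b x : ℝ}
    (hf : ContinuousOn f (Icc a b)) (hx : x ∈ Icc a b) :
    HasDerivWithinAt (fun y => ∫ t in a..y, f t) (f x) (Icc a b) x := by
  have : Fact (x ∈ Icc a b) := ⟨hx⟩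
  exact integral_hasDerivWithinAt_right
    ((hf.mono (uIcc_subset_Icc (left_mem_Icc.2 (hx.1.trans hx.2)) hx)).intervalIntegrable)
    ⟨Icc a b, self_mem_nhdsWithin, hf.aestronglyMeasurable measurableSet_Icc⟩ (hf x hx)

/-- Picard iterates of the linear equation `u' = L t u`, `u 0 = c`. -/
noncomputable def picardTerm (L : ℝ → F →L[ℝ] F) (c : F) : ℕ → ℝ → F
  | 0, _ => c
  | k + 1, x => ∫ t in (0:ℝ)..x, L t (picardTerm L c k t)

noncomputable def picardSeries (L : ℝ → F →L[ℝ] F) (c : F) (x : ℝ) : F :=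
  ∑' k, picardTerm L c k x

variable {L : ℝ → F →L[ℝ] F} {c : F} {b M x : ℝ}

theorem picardSeries_zero : picardSeries L c 0 = c := by
  rw [picardSeries, tsum_eq_single 0 fun k hk => ?_]
  · rfl
  · obtain ⟨k, rfl⟩ := Nat.exists_eq_succ_of_ne_zero hk
    simp [picardTerm]

theorem norm_picardTerm_le (hM : ∀ t ∈ Icc 0 b, ‖L t‖ ≤ M) (k : ℕ) :
    ∀ x ∈ Icc 0 b, ‖picardTerm L c k x‖ ≤ ‖c‖ * ((M * x) ^ k / k !) := by
  induction k with
  | zero => simp [picardTerm]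
  | succ k ih =>
    intro x hx
    have hbound : ∀ t ∈ Ioc 0 x,
        ‖L t (picardTerm L c k t)‖ ≤ ‖c‖ * M ^ (k + 1) / k ! * t ^ k := by
      intro t ht
      have ht : t ∈ Icc 0 b := ⟨ht.1.le, ht.2.trans hx.2⟩
      have hM0 : 0 ≤ M := (norm_nonneg _).trans (hM t ht)
      calc ‖L t (picardTerm L c k t)‖
          ≤ M * ‖picardTerm L c k t‖ := (L t).le_of_opNorm_le (hM t ht) _
        _ ≤ M * (‖c‖ * ((M * t) ^ k / k !)) := by gcongr; exact ih t ht
        _ = ‖c‖ * M ^ (k + 1) / k ! * t ^ k := by ring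
    calc ‖picardTerm L c (k + 1) x‖
        ≤ ∫ t in (0:ℝ)..x, ‖c‖ * M ^ (k + 1) / k ! * t ^ k :=
          norm_integral_le_of_norm_le hx.1 (ae_of_all _ hbound)
            (by apply Continuous.intervalIntegrable; fun_prop)
      _ = ‖c‖ * ((M * x) ^ (k + 1) / (k + 1)!) := by
          rw [intervalIntegral.integral_const_mul, integral_pow, Nat.factorial_succ]
          push_cast
          field_simp
          ring

theorem norm_picardTerm_le_of_mem (hM : ∀ t ∈ Icc 0 b, ‖L t‖ ≤ M) (k : ℕ) (hx : x ∈ Icc 0 b) :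
    ‖picardTerm L c k x‖ ≤ ‖c‖ * ((M * b) ^ k / k !) := by
  have hM0 : 0 ≤ M := (norm_nonneg _).trans (hM x hx)
  refine (norm_picardTerm_le hM k x hx).trans ?_
  gcongr
  · exact mul_nonneg hM0 hx.1
  · exact hx.2

theorem continuousOn_picardTerm [CompleteSpace F] (hL : ContinuousOn L (Icc 0 b)) (k : ℕ) :
    ContinuousOn (picardTerm L c k) (Icc 0 b) := by
  induction k with
  | zero => exact continuousOn_const
  | succ k ih =>
    exact fun x hx => ((hL.clm_apply ih).hasDerivWithinAt_integral hx).continuousWithinAt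

theorem continuousOn_picardSeries [CompleteSpace F] (hL : ContinuousOn L (Icc 0 b)) :
    ContinuousOn (picardSeries L c) (Icc 0 b) := by
  obtain ⟨M, hM⟩ := isCompact_Icc.exists_bound_of_continuousOn hL
  exact continuousOn_tsum (continuousOn_picardTerm hL)
    ((Real.summable_pow_div_factorial _).mul_left _) fun k _ hx => norm_picardTerm_le_of_mem hM k hx

theorem hasSum_picardTerm [CompleteSpace F] (hL : ContinuousOn L (Icc 0 b)) (hx : x ∈ Icc 0 b) :
    HasSum (fun k => picardTerm L c k x) (picardSeries L c x) := by
  obtain ⟨M, hM⟩ := isCompact_Icc.exists_bound_of_continuousOn hL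
  exact (Summable.of_norm_bounded ((Real.summable_pow_div_factorial _).mul_left _)
    fun k => norm_picardTerm_le_of_mem hM k hx).hasSum

theorem picardSeries_eq_add_integral [CompleteSpace F] (hL : ContinuousOn L (Icc 0 b))
    (hx : x ∈ Icc 0 b) :
    picardSeries L c x = c + ∫ t in (0:ℝ)..x, L t (picardSeries L c t) := by
  obtain ⟨M, hM⟩ := isCompact_Icc.exists_bound_of_continuousOn hL
  have hsub : uIoc 0 x ⊆ Icc 0 b := by
    rw [uIoc_of_le hx.1]; exact Ioc_subset_Icc_self.trans (Icc_subset_Icc le_rfl hx.2)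
  have hmeas : ∀ k, AEStronglyMeasurable (fun t => L t (picardTerm L c k t))
      (volume.restrict (uIoc 0 x)) := fun k =>
    ((hL.clm_apply (continuousOn_picardTerm hL k)).mono hsub).aestronglyMeasurable
      measurableSet_uIoc
  have hbound : ∀ k, ∀ᵐ t, t ∈ uIoc 0 x →
      ‖L t (picardTerm L c k t)‖ ≤ M * (‖c‖ * ((M * b) ^ k / k !)) := fun k =>
    ae_of_all _ fun t ht =>
      (L t).le_of_opNorm_le_of_le (hM t (hsub ht)) (norm_picardTerm_le_of_mem hM k (hsub ht))
  have htail : HasSum (fun k => ∫ t in (0:ℝ)..x, L t (picardTerm L c k t))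
      (∫ t in (0:ℝ)..x, L t (picardSeries L c t)) :=
    intervalIntegral.hasSum_integral_of_dominated_convergence
      (fun k _ => M * (‖c‖ * ((M * b) ^ k / k !))) hmeas hbound
      (ae_of_all _ fun _ _ => ((Real.summable_pow_div_factorial _).mul_left _).mul_left M)
      intervalIntegrable_const
      (ae_of_all _ fun t ht => (hasSum_picardTerm hL (hsub ht)).mapL (L t))
  exact (hasSum_picardTerm hL hx).unique
    (HasSum.zero_add (f := fun k => picardTerm L c k x) htail)

theorem hasDerivWithinAt_picardSeries [CompleteSpace F] (hL : ContinuousOn L (Icc 0 b))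
    (hx : x ∈ Icc 0 b) :
    HasDerivWithinAt (picardSeries L c) (L x (picardSeries L c x)) (Icc 0 b) x :=
  (((hL.clm_apply (continuousOn_picardSeries hL)).hasDerivWithinAt_integral hx).const_add c).congr
    (fun _ hy => picardSeries_eq_add_integral hL hy) (picardSeries_eq_add_integral hL hx)

end Picard

theorem ContinuousOn.matrix_mul {α ι κ σ : Type*} [TopologicalSpace α] [Fintype κ]
    {f : α → Matrix ι κ ℝ} {g : α → Matrix κ σ ℝ} {s : Set α}
    (hf : ContinuousOn f s) (hg : ContinuousOn g s) :
    ContinuousOn (fun t => f t * g t) s :=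
  (continuous_fst.matrix_mul continuous_snd).comp_continuousOn (hf.prodMk hg)

section MatrixCalculus

variable {ι κ σ : Type*} [Fintype ι] [Fintype κ] [Fintype σ]

noncomputable def Matrix.mulLeftCLM : Matrix ι κ ℝ →L[ℝ] Matrix κ σ ℝ →L[ℝ] Matrix ι σ ℝ :=
  LinearMap.toContinuousLinearMap
    (LinearMap.toContinuousLinearMap.toLinearMap ∘ₗ mulLinearMap ℝ)

noncomputable def Matrix.mulRightCLM : Matrix κ σ ℝ →L[ℝ] Matrix ι κ ℝ →L[ℝ] Matrix ι σ ℝ :=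
  LinearMap.toContinuousLinearMap
    (LinearMap.toContinuousLinearMap.toLinearMap ∘ₗ (mulLinearMap ℝ).flip)

variable {s : Set ℝ} {x : ℝ}

theorem HasDerivWithinAt.matrix_mul {f : ℝ → Matrix ι κ ℝ} {g : ℝ → Matrix κ σ ℝ}
    {f' : Matrix ι κ ℝ} {g' : Matrix κ σ ℝ}
    (hf : HasDerivWithinAt f f' s x) (hg : HasDerivWithinAt g g' s x) :
    HasDerivWithinAt (fun t => f t * g t) (f' * g x + f x * g') s x := by
  rw [add_comm]
  exact Matrix.mulLeftCLM.hasDerivWithinAt_of_bilinear hf hg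

theorem HasDerivWithinAt.matrix_mul_const {f : ℝ → Matrix ι κ ℝ} {f' : Matrix ι κ ℝ}
    (hf : HasDerivWithinAt f f' s x) (C : Matrix κ σ ℝ) :
    HasDerivWithinAt (fun t => f t * C) (f' * C) s x := by
  simpa using hf.matrix_mul (hasDerivWithinAt_const x s C)

theorem HasDerivWithinAt.matrix_inv [DecidableEq ι] {N : ℝ → Matrix ι ι ℝ} {N' : Matrix ι ι ℝ}
    (hN : HasDerivWithinAt N N' s x) (hx : IsUnit (N x)) :
    HasDerivWithinAt (fun y => (N y)⁻¹) (-((N x)⁻¹ * N' * (N x)⁻¹)) s x := by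
  have hunit : ∀ᶠ y in 𝓝[s] x, IsUnit (N y) := by
    have hdet := (continuous_id.matrix_det.continuousAt.comp_continuousWithinAt
      hN.continuousWithinAt).eventually_ne ((Matrix.isUnit_iff_isUnit_det _).1 hx).ne_zero
    exact hdet.mono fun y hy => (Matrix.isUnit_iff_isUnit_det _).2 (isUnit_iff_ne_zero.2 hy)
  have hinv : Tendsto (fun y => (N y)⁻¹) (𝓝[s] x) (𝓝 (N x)⁻¹) :=
    (continuousAt_matrix_inv _ (NormedRing.inverse_continuousAt
      ((Matrix.isUnit_iff_isUnit_det _).1 hx).unit)).tendsto.comp hN.continuousWithinAt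
  replace hN := hasDerivWithinAt_iff_tendsto_slope.mp hN
  refine hasDerivWithinAt_iff_tendsto_slope.mpr ?_
  have hslope : ∀ᶠ y in 𝓝[s \ {x}] x,
      (N y)⁻¹ * -slope N x y * (N x)⁻¹ = slope (fun y => (N y)⁻¹) x y := by
    filter_upwards [nhdsWithin_mono x sdiff_subset hunit] with y hy
    have hdiff : (N y)⁻¹ - (N x)⁻¹ = (N y)⁻¹ * -(N y - N x) * (N x)⁻¹ := by
      rw [neg_sub, Matrix.mul_sub, Matrix.sub_mul, mul_assoc,
        Matrix.mul_nonsing_inv _ ((Matrix.isUnit_iff_isUnit_det _).1 hx), mul_one,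
        Matrix.nonsing_inv_mul _ ((Matrix.isUnit_iff_isUnit_det _).1 hy), one_mul]
    rw [slope_def_module, slope_def_module, hdiff, ← smul_neg, Matrix.mul_smul, Matrix.smul_mul]
  rw [show -((N x)⁻¹ * N' * (N x)⁻¹) = (N x)⁻¹ * -N' * (N x)⁻¹ by noncomm_ring]
  exact (((hinv.mono_left (nhdsWithin_mono x sdiff_subset)).mul hN.neg).mul_const _).congr' hslope

end MatrixCalculus

section IntegralSeries

variable {ι : Type*} [Fintype ι] [DecidableEq ι] {X : ℝ → Matrix ι ι ℝ} {b x : ℝ}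

theorem ES_eq_picardSeries (X : ℝ → Matrix ι ι ℝ) :
    ES X = picardSeries (fun t => Matrix.mulLeftCLM (X t)) 1 := by
  have hterm : lterm X = picardTerm (fun t => Matrix.mulLeftCLM (X t)) 1 := by
    funext k x
    induction k generalizing x with
    | zero => rfl
    | succ k ih => simp only [lterm, picardTerm, ih]; rfl
  funext x
  simp only [ES, hterm]; rfl

theorem FS_eq_picardSeries (X : ℝ → Matrix ι ι ℝ) :
    FS X = picardSeries (fun t => Matrix.mulRightCLM (X t)) 1 := by
  have hterm : rterm X = picardTerm (fun t => Matrix.mulRightCLM (X t)) 1 := by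
    funext k x
    induction k generalizing x with
    | zero => rfl
    | succ k ih => simp only [rterm, picardTerm, ih]; rfl
  funext x
  simp only [FS, hterm]; rfl

theorem ES_zero : ES X 0 = 1 :=
  (congrFun (ES_eq_picardSeries X) 0).trans picardSeries_zero

theorem FS_zero : FS X 0 = 1 :=
  (congrFun (FS_eq_picardSeries X) 0).trans picardSeries_zero

theorem hasDerivWithinAt_ES (hX : ContinuousOn X (Icc 0 b)) (hx : x ∈ Icc 0 b) :
    HasDerivWithinAt (ES X) (X x * ES X x) (Icc 0 b) x := by
  rw [ES_eq_picardSeries]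
  exact hasDerivWithinAt_picardSeries (Matrix.mulLeftCLM.continuous.comp_continuousOn hX) hx

theorem hasDerivWithinAt_FS (hX : ContinuousOn X (Icc 0 b)) (hx : x ∈ Icc 0 b) :
    HasDerivWithinAt (FS X) (FS X x * X x) (Icc 0 b) x := by
  rw [FS_eq_picardSeries]
  exact hasDerivWithinAt_picardSeries (Matrix.mulRightCLM.continuous.comp_continuousOn hX) hx

end IntegralSeries

section Riccati

variable {ι κ : Type*} [Fintype ι] [Fintype κ]

theorem HasDerivWithinAt.matrix_bernoulli [DecidableEq κ] {U : ℝ → Matrix ι ι ℝ}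
    {V N : ℝ → Matrix κ κ ℝ} {A : Matrix ι ι ℝ} {B : Matrix κ κ ℝ} {P : Matrix κ ι ℝ}
    {W₀ : Matrix ι κ ℝ} {s : Set ℝ} {x : ℝ}
    (hU : HasDerivWithinAt U (A * U x) s x) (hV : HasDerivWithinAt V (V x * B) s x)
    (hN : HasDerivWithinAt N (V x * P * U x * W₀) s x) (hNx : IsUnit (N x)) :
    HasDerivWithinAt (fun y => U y * W₀ * (N y)⁻¹ * V y)
      (A * (U x * W₀ * (N x)⁻¹ * V x) + U x * W₀ * (N x)⁻¹ * V x * B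
        - U x * W₀ * (N x)⁻¹ * V x * P * (U x * W₀ * (N x)⁻¹ * V x)) s x := by
  convert ((hU.matrix_mul_const W₀).matrix_mul (hN.matrix_inv hNx)).matrix_mul hV using 1
  simp only [Matrix.add_mul, Matrix.mul_neg, Matrix.neg_mul, Matrix.mul_assoc]
  abel

theorem riccati_add_of_bernoulli {A : Matrix ι ι ℝ} {B : Matrix κ κ ℝ} {P : Matrix κ ι ℝ}
    {Q Y Y' Z Z' : Matrix ι κ ℝ} (hY : Y' + Y * P * Y + Y * B - A * Y - Q = 0)
    (hZ : Z' = (A - Y * P) * Z + Z * -(B + P * Y) - Z * P * Z) :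
    (Y' + Z') + (Y + Z) * P * (Y + Z) + (Y + Z) * B - A * (Y + Z) - Q = 0 := by
  rw [← hY, hZ]
  simp only [Matrix.mul_add, Matrix.add_mul, Matrix.sub_mul, Matrix.mul_neg, Matrix.mul_assoc]
  abel

end Riccati

theorem riccati_particular_solution_general {n m : ℕ} (b c : ℝ)
    (A : ℝ → Matrix (Fin n) (Fin n) ℝ) (B : ℝ → Matrix (Fin m) (Fin m) ℝ)
    (P : ℝ → Matrix (Fin m) (Fin n) ℝ) (Q : ℝ → Matrix (Fin n) (Fin m) ℝ)
    (hA : ContinuousOn A (Set.Icc 0 b)) (hB : ContinuousOn B (Set.Icc 0 b))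
    (hP : ContinuousOn P (Set.Icc 0 b))
    (Y Y' : ℝ → Matrix (Fin n) (Fin m) ℝ)
    (hY : ∀ x ∈ Set.Icc (0:ℝ) b, HasDerivWithinAt Y (Y' x) (Set.Icc 0 b) x)
    (hYeq : ∀ x ∈ Set.Icc (0:ℝ) b,
      Y' x + Y x * P x * Y x + Y x * B x - A x * Y x - Q x = 0)
    (hY0 : Y 0 = 0)
    (W₀ : Matrix (Fin n) (Fin m) ℝ)
    (R : ℝ → Matrix (Fin m) (Fin n) ℝ)
    (hR : ∀ x, R x = FS (fun t => -(B t + P t * Y t)) x * P x *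
      ES (fun t => A t - Y t * P t) x)
    (W : ℝ → Matrix (Fin n) (Fin m) ℝ)
    (hW : ∀ x, W x = Y x + ES (fun t => A t - Y t * P t) x * W₀ *
      (1 + (∫ t in (0:ℝ)..x, R t) * W₀)⁻¹ * FS (fun t => -(B t + P t * Y t)) x)
    (hcb : c ≤ b)
    (hinv : ∀ x ∈ Set.Icc (0:ℝ) c, IsUnit (1 + (∫ t in (0:ℝ)..x, R t) * W₀)) :
    W 0 = W₀ ∧
    ∀ x ∈ Set.Icc (0:ℝ) c, ∃ D,
      HasDerivWithinAt W D (Set.Icc 0 c) x ∧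
      D + W x * P x * W x + W x * B x - A x * W x - Q x = 0 := by
  obtain rfl : R = _ := funext hR
  obtain rfl : W = _ := funext hW
  have hsub : Icc 0 c ⊆ Icc 0 b := Icc_subset_Icc le_rfl hcb
  have hYc : ContinuousOn Y (Icc 0 b) := fun x hx => (hY x hx).continuousWithinAt
  have hU := fun x (hx : x ∈ Icc 0 b) => hasDerivWithinAt_ES (hA.sub (hYc.matrix_mul hP)) hx
  have hV := fun x (hx : x ∈ Icc 0 b) => hasDerivWithinAt_FS (hB.add (hP.matrix_mul hYc)).neg hx
  have hRc : ContinuousOn (fun t => FS (fun t => -(B t + P t * Y t)) t * P t *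
      ES (fun t => A t - Y t * P t) t) (Icc 0 b) :=
    (ContinuousOn.matrix_mul (fun x hx => (hV x hx).continuousWithinAt) hP).matrix_mul
      fun x hx => (hU x hx).continuousWithinAt
  refine ⟨by simp [hY0, ES_zero, FS_zero],
    fun x hx => ⟨_, ?_, riccati_add_of_bernoulli (hYeq x (hsub hx)) rfl⟩⟩
  have hN := (((hRc.hasDerivWithinAt_integral (hsub hx)).mono hsub).matrix_mul_const W₀).const_add 1
  exact ((hY x (hsub hx)).mono hsub).add
    (((hU x (hsub hx)).mono hsub).matrix_bernoulli ((hV x (hsub hx)).mono hsub) hN (hinv x hx))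

/-- Riccati solution built from a particular solution `Y` with `Y 0 = 0`:
with `R = ℱ(−(B+P·Y))·P·ℰ(A−Y·P)`, the function
`W = Y + ℰ(A−Y·P)·W₀·(1 + (∫_0^x R)·W₀)⁻¹·ℱ(−(B+P·Y))` solves the Riccati equation
with `W 0 = W₀`. -/
theorem riccati_particular_solution {n m : ℕ} (b c : ℝ)
    (A : ℝ → Matrix (Fin n) (Fin n) ℝ) (B : ℝ → Matrix (Fin m) (Fin m) ℝ)
    (P : ℝ → Matrix (Fin m) (Fin n) ℝ) (Q : ℝ → Matrix (Fin n) (Fin m) ℝ)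
    (hA : ContinuousOn A (Set.Icc 0 b)) (hB : ContinuousOn B (Set.Icc 0 b))
    (hP : ContinuousOn P (Set.Icc 0 b)) (hQ : ContinuousOn Q (Set.Icc 0 b))
    (Y Y' : ℝ → Matrix (Fin n) (Fin m) ℝ)
    (hY : ∀ x ∈ Set.Icc (0:ℝ) b, HasDerivWithinAt Y (Y' x) (Set.Icc 0 b) x)
    (hYeq : ∀ x ∈ Set.Icc (0:ℝ) b,
      Y' x + Y x * P x * Y x + Y x * B x - A x * Y x - Q x = 0)
    (hY0 : Y 0 = 0)
    (W₀ : Matrix (Fin n) (Fin m) ℝ)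
    (R : ℝ → Matrix (Fin m) (Fin n) ℝ)
    (hR : ∀ x, R x = FS (fun t => -(B t + P t * Y t)) x * P x *
      ES (fun t => A t - Y t * P t) x)
    (W : ℝ → Matrix (Fin n) (Fin m) ℝ)
    (hW : ∀ x, W x = Y x + ES (fun t => A t - Y t * P t) x * W₀ *
      (1 + (∫ t in (0:ℝ)..x, R t) * W₀)⁻¹ * FS (fun t => -(B t + P t * Y t)) x)
    (hc0 : 0 ≤ c) (hcb : c ≤ b)
    (hinv : ∀ x ∈ Set.Icc (0:ℝ) c, IsUnit (1 + (∫ t in (0:ℝ)..x, R t) * W₀)) :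
    W 0 = W₀ ∧
    ∀ x ∈ Set.Icc (0:ℝ) c, ∃ D,
      HasDerivWithinAt W D (Set.Icc 0 c) x ∧
      D + W x * P x * W x + W x * B x - A x * W x - Q x = 0 :=
  riccati_particular_solution_general b c A B P Q hA hB hP Y Y' hY hYeq hY0 W₀ R hR W hW hcb hinv
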